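/- arXiv:2510.14523 — 9 statements merged into one kernel-verified Lean document; each statement's English description precedes it below -/
import Mathlib

section
/- Let M ≥ 1, r ≥ 1 be integers and N_1,…,N_M ≥ 1. Let (θ^{(k)}_{i,s}), for k ∈ {1,…,M}, i ∈ {1,…,N_k}, s ∈ {1,…,r}, be a mutually independent family of square-integrable real-valued random variables with E[θ^{(k)}_{i,s}] = μ_k and Var(θ^{(k)}_{i,s}) = σ_k² for all i, s. For a multi-index i = (i_1,…,i_M) define η_i = Σ_{s=1}^r ∏_{k=1}^M θ^{(k)}_{i_k,s}. Then for any two multi-indices i, j with shared-mode set S = {k : i_k = j_k}, one has Cov(η_i, η_j) = r · ( ∏_{k∈S} (μ_k² + σ_k²) − ∏_{k∈S} μ_k² ) · ∏_{k∉S} μ_k². -/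
open MeasureTheory ProbabilityTheory

/-- Covariance of two real random variables: `Cov(X,Y) = E[XY] - E[X]E[Y]`. -/
noncomputable def covRV {Ω : Type*} [MeasurableSpace Ω] (P : Measure Ω) (X Y : Ω → ℝ) : ℝ :=
  (∫ ω, X ω * Y ω ∂P) - (∫ ω, X ω ∂P) * (∫ ω, Y ω ∂P)

/-!
Group the factor entries by mode: the blocks `θ k · ·` are independent, so the expectation of a
product over modes factorizes. Hence `E[η_i η_j] = ∑_{s,t} ∏_k E[θ_{k,i_k,s} θ_{k,j_k,t}]`, and
each factor is `μ_k²`, plus `σ_k²` exactly when the two entries are the same variable, i.e. when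
`s = t` and `k ∈ S`. The `r² - r` off-diagonal pairs `s ≠ t` thus contribute `∏_k μ_k²` each, and
together with `E[η_i] E[η_j] = r² ∏_k μ_k²` only the `r` diagonal terms survive.
-/

namespace ProbabilityTheory

open Measure

variable {Ω : Type*} [MeasurableSpace Ω] {P : Measure Ω}

lemma iIndepFun.curry {ι : Type*} [Countable ι] {κ : ι → Type*} [∀ i, Countable (κ i)]
    {𝓧 : (i : ι) → κ i → Type*} [∀ i j, MeasurableSpace (𝓧 i j)]
    {X : (i : ι) → (j : κ i) → Ω → 𝓧 i j} (mX : ∀ i j, AEMeasurable (X i j) P)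
    (h : iIndepFun (fun p : (i : ι) × κ i ↦ X p.1 p.2) P) :
    iIndepFun (fun i ω j ↦ X i j ω) P := by
  have := h.isProbabilityMeasure
  have : ∀ i j, IsProbabilityMeasure (P.map (X i j)) :=
    fun i j ↦ isProbabilityMeasure_map (mX i j)
  have hblock : ∀ i, P.map (fun ω j ↦ X i j ω) = infinitePi fun j ↦ P.map (X i j) :=
    fun i ↦ (h.precomp sigma_mk_injective).map_fun_eq_infinitePi_map₀' (mX i)
  rw [iIndepFun_iff_map_fun_eq_infinitePi_map₀' fun i ↦ aemeasurable_pi_iff.2 (mX i)]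
  simp_rw [hblock]
  calc P.map (fun ω i j ↦ X i j ω)
      = (P.map fun ω (p : (i : ι) × κ i) ↦ X p.1 p.2 ω).map (MeasurableEquiv.piCurry 𝓧) := by
        rw [AEMeasurable.map_map_of_aemeasurable (by fun_prop)
          (aemeasurable_pi_iff.2 fun p ↦ mX p.1 p.2)]
        rfl
    _ = infinitePi fun i ↦ infinitePi fun j ↦ P.map (X i j) := by
        rw [h.map_fun_eq_infinitePi_map₀' fun p ↦ mX p.1 p.2]
        exact infinitePi_map_piCurry fun i j ↦ P.map (X i j)

lemma iIndepFun.integrable_finsetProd {ι : Type*} {X : ι → Ω → ℝ} (h : iIndepFun X P)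
    (hX : ∀ i, Integrable (X i) P) (s : Finset ι) :
    Integrable (∏ i ∈ s, X i) P := by
  have := h.isProbabilityMeasure
  classical
  induction s using Finset.induction_on with
  | empty => exact integrable_const (1 : ℝ)
  | insert i s hi ih =>
    rw [Finset.prod_insert hi]
    exact (h.indepFun_finsetProd_of_notMem₀ (fun j ↦ (hX j).aemeasurable) hi).symm.integrable_mul
      (hX i) ih

lemma iIndepFun.integral_mul_eq_add_ite {ι : Type*} [DecidableEq ι] {X : ι → Ω → ℝ}
    (h : iIndepFun X P) (hX : ∀ i, MemLp (X i) 2 P) (i j : ι) :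
    ∫ ω, X i ω * X j ω ∂P =
      (∫ ω, X i ω ∂P) * (∫ ω, X j ω ∂P) + if i = j then variance (X i) P else 0 := by
  have := h.isProbabilityMeasure
  obtain rfl | hij := eq_or_ne i j
  · simp [variance_eq_sub (hX i), ← sq]
  · rw [if_neg hij, add_zero]
    exact (h.indepFun hij).integral_fun_mul_eq_mul_integral
      (hX i).aestronglyMeasurable (hX j).aestronglyMeasurable

lemma iIndepFun.iIndepFun_mul_eval {ι : Type*} [Countable ι] {κ : ι → Type*}
    [∀ i, Countable (κ i)] {X : (i : ι) → κ i → Ω → ℝ} (mX : ∀ i j, AEMeasurable (X i j) P)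
    (h : iIndepFun (fun p : (i : ι) × κ i ↦ X p.1 p.2) P) (a b : (i : ι) → κ i) :
    iIndepFun (fun i ω ↦ X i (a i) ω * X i (b i) ω) P :=
  (h.curry mX).comp (fun i v ↦ v (a i) * v (b i)) fun _ ↦ by fun_prop

end ProbabilityTheory

open Finset in
lemma sum_sum_prod_add_ite_sub {ι ρ : Type*} [Fintype ι] [Fintype ρ] [DecidableEq ρ]
    {n : ι → Type*} [∀ k, DecidableEq (n k)] (μ σ2 : ι → ℝ) (i j : (k : ι) → n k) :
    (∑ s : ρ, ∑ t : ρ, ∏ k, (μ k ^ 2 + if (i k, s) = (j k, t) then σ2 k else 0)) -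
        (Fintype.card ρ * ∏ k, μ k) * (Fintype.card ρ * ∏ k, μ k) =
      Fintype.card ρ * ((∏ k ∈ univ.filter (fun k ↦ i k = j k), (μ k ^ 2 + σ2 k)) -
          ∏ k ∈ univ.filter (fun k ↦ i k = j k), μ k ^ 2) *
        ∏ k ∈ univ.filter (fun k ↦ ¬ i k = j k), μ k ^ 2 := by
  set D := ((∏ k ∈ univ.filter (fun k ↦ i k = j k), (μ k ^ 2 + σ2 k)) -
      ∏ k ∈ univ.filter (fun k ↦ i k = j k), μ k ^ 2) *
    ∏ k ∈ univ.filter (fun k ↦ ¬ i k = j k), μ k ^ 2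
  have hsplit : ∀ s t : ρ, ∏ k, (μ k ^ 2 + if (i k, s) = (j k, t) then σ2 k else 0) =
      (∏ k, μ k ^ 2) + if s = t then D else 0 := by
    intro s t
    obtain rfl | hst := eq_or_ne s t
    · have hite : ∀ k, μ k ^ 2 + (if (i k, s) = (j k, s) then σ2 k else 0) =
          if i k = j k then μ k ^ 2 + σ2 k else μ k ^ 2 := fun k ↦ by
        by_cases h : i k = j k <;> simp [h]
      rw [if_pos rfl, prod_congr rfl fun k _ ↦ hite k, prod_ite,
        ← prod_filter_mul_prod_filter_not univ fun k ↦ i k = j k]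
      ring
    · simp [hst]
  simp only [hsplit, sum_add_distrib, sum_ite_eq, sum_const, card_univ, nsmul_eq_mul, mem_univ,
    if_true, D]
  rw [prod_pow]
  ring

section CP

variable {Ω ι ρ : Type*} [MeasurableSpace Ω] {P : Measure Ω} [Fintype ι] [Fintype ρ]
  {n : ι → Type*}

def cpRate (θ : (k : ι) → n k → ρ → Ω → ℝ) (i : (k : ι) → n k) (ω : Ω) : ℝ :=
  ∑ s, ∏ k, θ k (i k) s ω

variable {θ : (k : ι) → n k → ρ → Ω → ℝ}

lemma integral_cpRate (hL2 : ∀ k i s, MemLp (θ k i s) 2 P)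
    (hIndep : iIndepFun (fun a : (k : ι) × n k × ρ ↦ θ a.1 a.2.1 a.2.2) P) {μ : ι → ℝ}
    (hmean : ∀ k i s, ∫ ω, θ k i s ω ∂P = μ k) (i : (k : ι) → n k) :
    ∫ ω, cpRate θ i ω ∂P = Fintype.card ρ * ∏ k, μ k := by
  have := hIndep.isProbabilityMeasure
  have hterm : ∀ s, iIndepFun (fun k ↦ θ k (i k) s) P := fun s ↦
    hIndep.precomp (g := fun k ↦ ⟨k, i k, s⟩) fun _ _ h ↦ congrArg Sigma.fst h
  have hint : ∀ s, Integrable (fun ω ↦ ∏ k, θ k (i k) s ω) P := fun s ↦ by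
    simpa only [Finset.prod_fn] using
      (hterm s).integrable_finsetProd (fun k ↦ (hL2 k _ s).integrable one_le_two) Finset.univ
  simp only [cpRate]
  rw [integral_finsetSum _ fun s _ ↦ hint s]
  simp_rw [(hterm _).integral_fun_prod_eq_prod_integral fun k ↦ (hL2 k _ _).aestronglyMeasurable,
    hmean, Finset.sum_const, Finset.card_univ, nsmul_eq_mul]

lemma integral_cpRate_mul [∀ k, Countable (n k)] [∀ k, DecidableEq (n k)] [DecidableEq ρ]
    (hL2 : ∀ k i s, MemLp (θ k i s) 2 P)
    (hIndep : iIndepFun (fun a : (k : ι) × n k × ρ ↦ θ a.1 a.2.1 a.2.2) P) {μ σ2 : ι → ℝ}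
    (hmean : ∀ k i s, ∫ ω, θ k i s ω ∂P = μ k) (hvar : ∀ k i s, variance (θ k i s) P = σ2 k)
    (i j : (k : ι) → n k) :
    ∫ ω, cpRate θ i ω * cpRate θ j ω ∂P =
      ∑ s : ρ, ∑ t : ρ, ∏ k, (μ k ^ 2 + if (i k, s) = (j k, t) then σ2 k else 0) := by
  have hpair : ∀ k (p q : n k × ρ), ∫ ω, θ k p.1 p.2 ω * θ k q.1 q.2 ω ∂P =
      μ k ^ 2 + if p = q then σ2 k else 0 := fun k p q ↦ by
    classical
    have := hIndep.integral_mul_eq_add_ite (fun a ↦ hL2 _ _ _) ⟨k, p⟩ ⟨k, q⟩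
    simpa [hmean, hvar, ← sq] using this
  have hterm : ∀ s t, iIndepFun (fun k ω ↦ θ k (i k) s ω * θ k (j k) t ω) P := fun s t ↦
    hIndep.iIndepFun_mul_eval (X := fun k p ↦ θ k p.1 p.2)
      (fun k p ↦ (hL2 k p.1 p.2).aestronglyMeasurable.aemeasurable)
      (fun k ↦ (i k, s)) (fun k ↦ (j k, t))
  have hint : ∀ s t, Integrable (fun ω ↦ ∏ k, θ k (i k) s ω * θ k (j k) t ω) P := fun s t ↦ by
    simpa only [Finset.prod_fn] using (hterm s t).integrable_finsetProd
      (fun k ↦ (hL2 k _ s).integrable_mul (hL2 k _ t)) Finset.univ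
  simp_rw [cpRate, Finset.sum_mul_sum, ← Finset.prod_mul_distrib]
  rw [integral_finsetSum _ fun s _ ↦ integrable_finsetSum _ fun t _ ↦ hint s t]
  refine Finset.sum_congr rfl fun s _ ↦ ?_
  rw [integral_finsetSum _ fun t _ ↦ hint s t]
  refine Finset.sum_congr rfl fun t _ ↦ ?_
  rw [(hterm s t).integral_fun_prod_eq_prod_integral fun k ↦
    ((hL2 k _ s).integrable_mul (hL2 k _ t)).aestronglyMeasurable]
  exact Finset.prod_congr rfl fun k _ ↦ hpair k (i k, s) (j k, t)

end CP

theorem cp_exact_sharing_covariance_general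
    {Ω : Type*} [MeasurableSpace Ω] (P : Measure Ω)
    (M r : ℕ)
    (N : Fin M → ℕ)
    (θ : (k : Fin M) → Fin (N k) → Fin r → Ω → ℝ)
    (hL2 : ∀ k i s, MemLp (θ k i s) 2 P)
    (hIndep : iIndepFun
      (fun a : ((k : Fin M) × Fin (N k) × Fin r) => θ a.1 a.2.1 a.2.2) P)
    (μm σ2 : Fin M → ℝ)
    (hmean : ∀ k i s, ∫ ω, θ k i s ω ∂P = μm k)
    (hvar : ∀ k i s, variance (θ k i s) P = σ2 k)
    (i j : (k : Fin M) → Fin (N k)) :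
    covRV P (fun ω => ∑ s : Fin r, ∏ k : Fin M, θ k (i k) s ω)
            (fun ω => ∑ s : Fin r, ∏ k : Fin M, θ k (j k) s ω)
      = (r : ℝ) *
          ((∏ k ∈ Finset.univ.filter (fun k => i k = j k), (μm k ^ 2 + σ2 k))
            - ∏ k ∈ Finset.univ.filter (fun k => i k = j k), μm k ^ 2) *
          ∏ k ∈ Finset.univ.filter (fun k => ¬ i k = j k), μm k ^ 2 := by
  change covRV P (cpRate θ i) (cpRate θ j) = _
  rw [covRV, integral_cpRate_mul hL2 hIndep hmean hvar, integral_cpRate hL2 hIndep hmean,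
    integral_cpRate hL2 hIndep hmean, sum_sum_prod_add_ite_sub, Fintype.card_fin]

/-- Exact-sharing covariance of the PARAFAC/CP model: for jointly independent
square-integrable factor entries `θ k i s` with mean `μm k` and variance `σ2 k`,
and rate entries `η i = ∑ s, ∏ k, θ k (i k) s`, the covariance of `η i` and `η j`
for multi-indices with shared-mode set `S = {k : i k = j k}` equals
`r * (∏_{k∈S} (μ k² + σ k²) − ∏_{k∈S} μ k²) * ∏_{k∉S} μ k²`. -/
theorem cp_exact_sharing_covariance
    {Ω : Type*} [MeasurableSpace Ω] (P : Measure Ω) [IsProbabilityMeasure P]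
    (M r : ℕ) (hM : 1 ≤ M) (hr : 1 ≤ r)
    (N : Fin M → ℕ) (hN : ∀ k, 1 ≤ N k)
    (θ : (k : Fin M) → Fin (N k) → Fin r → Ω → ℝ)
    (hL2 : ∀ k i s, MemLp (θ k i s) 2 P)
    (hIndep : iIndepFun
      (fun a : ((k : Fin M) × Fin (N k) × Fin r) => θ a.1 a.2.1 a.2.2) P)
    (μm σ2 : Fin M → ℝ)
    (hmean : ∀ k i s, ∫ ω, θ k i s ω ∂P = μm k)
    (hvar : ∀ k i s, variance (θ k i s) P = σ2 k)
    (i j : (k : Fin M) → Fin (N k)) :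
    covRV P (fun ω => ∑ s : Fin r, ∏ k : Fin M, θ k (i k) s ω)
            (fun ω => ∑ s : Fin r, ∏ k : Fin M, θ k (j k) s ω)
      = (r : ℝ) *
          ((∏ k ∈ Finset.univ.filter (fun k => i k = j k), (μm k ^ 2 + σ2 k))
            - ∏ k ∈ Finset.univ.filter (fun k => i k = j k), μm k ^ 2) *
          ∏ k ∈ Finset.univ.filter (fun k => ¬ i k = j k), μm k ^ 2 :=
  cp_exact_sharing_covariance_general P M r N θ hL2 hIndep μm σ2 hmean hvar i j
end

section
/- Let M ≥ 2 be an integer, r a positive real, μ_1,…,μ_M nonzero reals, and σ_1²,…,σ_M² positive reals. Define E² = r² ∏_{k=1}^M μ_k², v_{{p}} = r σ_p² ∏_{k≠p} μ_k² for each p, and v_{{p,q}} = r σ_p² σ_q² ∏_{k∉{p,q}} μ_k² for p ≠ q. Then for any two distinct modes p ≠ q, (v_{{p,q}} · E²) / (v_{{p}} · v_{{q}}) = r. -/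
/-! With `P = ∏_{k ∉ {p,q}} μ k ^ 2`, the products over `{p}ᶜ`, `{q}ᶜ` and all modes are
`μ q² P`, `μ p² P` and `μ p² μ q² P`, so the numerator is `r³ σ p σ q μ p² μ q² P²` and the
denominator is the same expression with `r²` in place of `r³`. -/

namespace Finset

variable {ι M : Type*} [Fintype ι] [DecidableEq ι] [CommMonoid M]

theorem prod_compl_singleton_eq_mul_prod_compl_pair (f : ι → M) {p q : ι} (hpq : p ≠ q) :
    ∏ k ∈ ({q} : Finset ι)ᶜ, f k = f p * ∏ k ∈ ({p, q} : Finset ι)ᶜ, f k := by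
  rw [compl_insert, mul_prod_erase _ _ (by simpa using hpq)]

theorem prod_univ_eq_mul_mul_prod_compl_pair (f : ι → M) {p q : ι} (hpq : p ≠ q) :
    ∏ k, f k = f p * f q * ∏ k ∈ ({p, q} : Finset ι)ᶜ, f k := by
  rw [Fintype.prod_eq_mul_prod_compl p, pair_comm,
    prod_compl_singleton_eq_mul_prod_compl_pair f hpq.symm, mul_assoc]

end Finset

theorem cp_closed_form_rank_general
    (M : ℕ) (r : ℝ) (hr : 0 < r)
    (μ : Fin M → ℝ) (hμ : ∀ k, μ k ≠ 0)
    (σ2 : Fin M → ℝ) (hσ : ∀ k, 0 < σ2 k)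
    (p q : Fin M) (hpq : p ≠ q) :
    ((r * σ2 p * σ2 q * ∏ k ∈ ({p, q} : Finset (Fin M))ᶜ, μ k ^ 2) *
        (r ^ 2 * ∏ k : Fin M, μ k ^ 2)) /
      ((r * σ2 p * ∏ k ∈ ({p} : Finset (Fin M))ᶜ, μ k ^ 2) *
        (r * σ2 q * ∏ k ∈ ({q} : Finset (Fin M))ᶜ, μ k ^ 2)) = r := by
  set f : Fin M → ℝ := fun k ↦ μ k ^ 2
  have hP : ∏ k ∈ ({p, q} : Finset (Fin M))ᶜ, f k ≠ 0 :=
    Finset.prod_ne_zero_iff.2 fun k _ ↦ pow_ne_zero 2 (hμ k)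
  have hp : μ p ≠ 0 := hμ p
  have hq : μ q ≠ 0 := hμ q
  have hσp : σ2 p ≠ 0 := (hσ p).ne'
  have hσq : σ2 q ≠ 0 := (hσ q).ne'
  rw [Finset.prod_univ_eq_mul_mul_prod_compl_pair f hpq,
    Finset.prod_compl_singleton_eq_mul_prod_compl_pair f hpq,
    Finset.prod_compl_singleton_eq_mul_prod_compl_pair f hpq.symm, Finset.pair_comm q p]
  refine div_eq_of_eq_mul (by positivity) ?_
  ring

/-- Closed-form rank estimator for the PARAFAC/CP model: with
`E² = r² ∏ μ k²`, `v_{p} = r σ p² ∏_{k≠p} μ k²` and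
`v_{p,q} = r σ p² σ q² ∏_{k∉{p,q}} μ k²`, for any distinct modes `p ≠ q`,
`(v_{p,q} · E²) / (v_{p} · v_{q}) = r`. -/
theorem cp_closed_form_rank
    (M : ℕ) (hM : 2 ≤ M) (r : ℝ) (hr : 0 < r)
    (μ : Fin M → ℝ) (hμ : ∀ k, μ k ≠ 0)
    (σ2 : Fin M → ℝ) (hσ : ∀ k, 0 < σ2 k)
    (p q : Fin M) (hpq : p ≠ q) :
    ((r * σ2 p * σ2 q * ∏ k ∈ ({p, q} : Finset (Fin M))ᶜ, μ k ^ 2) *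
        (r ^ 2 * ∏ k : Fin M, μ k ^ 2)) /
      ((r * σ2 p * ∏ k ∈ ({p} : Finset (Fin M))ᶜ, μ k ^ 2) *
        (r * σ2 q * ∏ k ∈ ({q} : Finset (Fin M))ᶜ, μ k ^ 2)) = r :=
  cp_closed_form_rank_general M r hr μ hμ σ2 hσ p q hpq
end

section
/- Let M ≥ 2 be an integer and p ≠ q two distinct modes. Let r, r' be positive reals, μ_1,…,μ_M and μ'_1,…,μ'_M nonzero reals, and σ_1²,…,σ_M², σ'_1²,…,σ'_M² positive reals. Define E² = r² ∏_{k=1}^M μ_k², v_{{p}} = r σ_p² ∏_{k≠p} μ_k², v_{{q}} = r σ_q² ∏_{k≠q} μ_k², v_{{p,q}} = r σ_p² σ_q² ∏_{k∉{p,q}} μ_k², and the corresponding primed quantities from (r', μ', σ'). If E² = E'², v_{{p}} = v'_{{p}}, v_{{q}} = v'_{{q}} and v_{{p,q}} = v'_{{p,q}}, then r = r'. -/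
lemma prod_compl_key {M : ℕ} (p q : Fin M) (hpq : p ≠ q)
    (f : Fin M → ℝ) (hf : ∀ k, f k ≠ 0) :
    (∏ k ∈ ({p} : Finset (Fin M))ᶜ, f k) * (∏ k ∈ ({q} : Finset (Fin M))ᶜ, f k)
      = (∏ k : Fin M, f k) * ∏ k ∈ ({p, q} : Finset (Fin M))ᶜ, f k := by
  have hp : f p * ∏ k ∈ ({p} : Finset (Fin M))ᶜ, f k = ∏ k : Fin M, f k := by
    simpa using Finset.prod_mul_prod_compl ({p} : Finset (Fin M)) f
  have hq : f q * ∏ k ∈ ({q} : Finset (Fin M))ᶜ, f k = ∏ k : Fin M, f k := by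
    simpa using Finset.prod_mul_prod_compl ({q} : Finset (Fin M)) f
  have hpq2 : (f p * f q) * ∏ k ∈ ({p, q} : Finset (Fin M))ᶜ, f k = ∏ k : Fin M, f k := by
    have := Finset.prod_mul_prod_compl ({p, q} : Finset (Fin M)) f
    rwa [Finset.prod_pair hpq] at this
  have hne : f p * f q ≠ 0 := mul_ne_zero (hf p) (hf q)
  apply mul_left_cancel₀ hne
  calc (f p * f q) * ((∏ k ∈ ({p} : Finset (Fin M))ᶜ, f k) * ∏ k ∈ ({q} : Finset (Fin M))ᶜ, f k)
      = (f p * ∏ k ∈ ({p} : Finset (Fin M))ᶜ, f k) * (f q * ∏ k ∈ ({q} : Finset (Fin M))ᶜ, f k) := by ring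
    _ = (∏ k : Fin M, f k) * (∏ k : Fin M, f k) := by rw [hp, hq]
    _ = (f p * f q) * ((∏ k : Fin M, f k) * ∏ k ∈ ({p, q} : Finset (Fin M))ᶜ, f k) := by
        rw [← hpq2]; ring

/-- Identifiability of the PARAFAC/CP rank from first and second prior
predictive moments: two parameter configurations `(r, μ, σ²)` and `(r', μ', σ'²)`
producing the same squared mean `E²` and pure interaction terms
`v_{p}`, `v_{q}`, `v_{p,q}` must have the same rank. -/
theorem cp_rank_identifiability
    (M : ℕ) (hM : 2 ≤ M) (p q : Fin M) (hpq : p ≠ q)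
    (r r' : ℝ) (hr : 0 < r) (hr' : 0 < r')
    (μ μ' : Fin M → ℝ) (hμ : ∀ k, μ k ≠ 0) (hμ' : ∀ k, μ' k ≠ 0)
    (σ2 σ2' : Fin M → ℝ) (hσ : ∀ k, 0 < σ2 k) (hσ' : ∀ k, 0 < σ2' k)
    (hE : r ^ 2 * ∏ k : Fin M, μ k ^ 2 = r' ^ 2 * ∏ k : Fin M, μ' k ^ 2)
    (hvp : r * σ2 p * ∏ k ∈ ({p} : Finset (Fin M))ᶜ, μ k ^ 2
         = r' * σ2' p * ∏ k ∈ ({p} : Finset (Fin M))ᶜ, μ' k ^ 2)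
    (hvq : r * σ2 q * ∏ k ∈ ({q} : Finset (Fin M))ᶜ, μ k ^ 2
         = r' * σ2' q * ∏ k ∈ ({q} : Finset (Fin M))ᶜ, μ' k ^ 2)
    (hvpq : r * σ2 p * σ2 q * ∏ k ∈ ({p, q} : Finset (Fin M))ᶜ, μ k ^ 2
          = r' * σ2' p * σ2' q * ∏ k ∈ ({p, q} : Finset (Fin M))ᶜ, μ' k ^ 2) :
    r = r' := by
  have hsq : ∀ k, μ k ^ 2 ≠ 0 := fun k => pow_ne_zero 2 (hμ k)
  have hsq' : ∀ k, μ' k ^ 2 ≠ 0 := fun k => pow_ne_zero 2 (hμ' k)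
  have hAB := prod_compl_key p q hpq (fun k => μ k ^ 2) hsq
  have hAB' := prod_compl_key p q hpq (fun k => μ' k ^ 2) hsq'
  set Ap := ∏ k ∈ ({p} : Finset (Fin M))ᶜ, μ k ^ 2 with hAp
  set Aq := ∏ k ∈ ({q} : Finset (Fin M))ᶜ, μ k ^ 2 with hAq
  set B := ∏ k ∈ ({p, q} : Finset (Fin M))ᶜ, μ k ^ 2 with hB
  set P := ∏ k : Fin M, μ k ^ 2 with hP
  set Ap' := ∏ k ∈ ({p} : Finset (Fin M))ᶜ, μ' k ^ 2 with hAp'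
  set Aq' := ∏ k ∈ ({q} : Finset (Fin M))ᶜ, μ' k ^ 2 with hAq'
  set B' := ∏ k ∈ ({p, q} : Finset (Fin M))ᶜ, μ' k ^ 2 with hB'
  set P' := ∏ k : Fin M, μ' k ^ 2 with hP'
  -- key identity: r * (vp * vq) = vpq * E²
  have key : r * ((r * σ2 p * Ap) * (r * σ2 q * Aq))
      = (r * σ2 p * σ2 q * B) * (r ^ 2 * P) := by
    simp only [hAp, hAq, hB, hP] at *
    linear_combination (r ^ 3 * σ2 p * σ2 q) * hAB
  have key' : r' * ((r' * σ2' p * Ap') * (r' * σ2' q * Aq'))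
      = (r' * σ2' p * σ2' q * B') * (r' ^ 2 * P') := by
    simp only [hAp', hAq', hB', hP'] at *
    linear_combination (r' ^ 3 * σ2' p * σ2' q) * hAB'
  have hvv : r * ((r * σ2 p * Ap) * (r * σ2 q * Aq))
      = r' * ((r * σ2 p * Ap) * (r * σ2 q * Aq)) := by
    rw [key, hvpq, hE, ← key', hvp, hvq]
  have hApos : 0 < Ap := Finset.prod_pos fun k _ => pow_two_pos_of_ne_zero (hμ k)
  have hAqpos : 0 < Aq := Finset.prod_pos fun k _ => pow_two_pos_of_ne_zero (hμ k)
  have hne : (r * σ2 p * Ap) * (r * σ2 q * Aq) ≠ 0 :=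
    ne_of_gt (mul_pos (mul_pos (mul_pos hr (hσ p)) hApos) (mul_pos (mul_pos hr (hσ q)) hAqpos))
  exact mul_right_cancel₀ hne hvv
end

section
/- Let M ≥ 1 be an integer. For any two vectors of positive integers (r_1,…,r_M) and (r'_1,…,r'_M), and any positive reals μ_G², σ_G², μ_1²,…,μ_M², σ_1²,…,σ_M², there exist positive reals μ'_G², σ'_G², μ'_1²,…,μ'_M², σ'_1²,…,σ'_M² such that the 2M+2 Tucker moment monomials coincide: μ'_G² ∏_q (r'_q² μ'_q²) = μ_G² ∏_q (r_q² μ_q²); σ'_G² ∏_q (r'_q² μ'_q²) = σ_G² ∏_q (r_q² μ_q²); and for every p, μ'_G² (r'_p σ'_p²) ∏_{q≠p} (r'_q² μ'_q²) = μ_G² (r_p σ_p²) ∏_{q≠p} (r_q² μ_q²) and σ'_G² (r'_p σ'_p²) ∏_{q≠p} (r'_q² μ'_q²) = σ_G² (r_p σ_p²) ∏_{q≠p} (r_q² μ_q²). -/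
/-- Non-identifiability of the Tucker ranks from first and second prior
predictive moments: for any two vectors of positive integer ranks `r`, `r'`
and any positive prior moments `(μG², σG², μ k², σ k²)`, there exist positive
primed prior moments reproducing all `2M+2` Tucker moment monomials. -/
theorem tucker_rank_nonidentifiability
    (M : ℕ) (hM : 1 ≤ M)
    (r r' : Fin M → ℕ) (hr : ∀ q, 0 < r q) (hr' : ∀ q, 0 < r' q)
    (μG2 σG2 : ℝ) (hμG2 : 0 < μG2) (hσG2 : 0 < σG2)
    (μ2 σ2 : Fin M → ℝ) (hμ2 : ∀ q, 0 < μ2 q) (hσ2 : ∀ q, 0 < σ2 q) :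
    ∃ (μG2' σG2' : ℝ) (μ2' σ2' : Fin M → ℝ),
      0 < μG2' ∧ 0 < σG2' ∧ (∀ q, 0 < μ2' q) ∧ (∀ q, 0 < σ2' q) ∧
      (μG2' * ∏ q : Fin M, (r' q : ℝ) ^ 2 * μ2' q
        = μG2 * ∏ q : Fin M, (r q : ℝ) ^ 2 * μ2 q) ∧
      (σG2' * ∏ q : Fin M, (r' q : ℝ) ^ 2 * μ2' q
        = σG2 * ∏ q : Fin M, (r q : ℝ) ^ 2 * μ2 q) ∧
      (∀ p : Fin M,
        (μG2' * ((r' p : ℝ) * σ2' p) * ∏ q ∈ ({p} : Finset (Fin M))ᶜ, (r' q : ℝ) ^ 2 * μ2' q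
          = μG2 * ((r p : ℝ) * σ2 p) * ∏ q ∈ ({p} : Finset (Fin M))ᶜ, (r q : ℝ) ^ 2 * μ2 q) ∧
        (σG2' * ((r' p : ℝ) * σ2' p) * ∏ q ∈ ({p} : Finset (Fin M))ᶜ, (r' q : ℝ) ^ 2 * μ2' q
          = σG2 * ((r p : ℝ) * σ2 p) * ∏ q ∈ ({p} : Finset (Fin M))ᶜ, (r q : ℝ) ^ 2 * μ2 q)) := by
  have hrpos : ∀ q, (0:ℝ) < (r q : ℝ) := fun q => by exact_mod_cast hr q
  have hr'pos : ∀ q, (0:ℝ) < (r' q : ℝ) := fun q => by exact_mod_cast hr' q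
  refine ⟨μG2, σG2, fun q => (r q : ℝ)^2 * μ2 q / (r' q : ℝ)^2,
    fun q => (r q : ℝ) * σ2 q / (r' q : ℝ), hμG2, hσG2,
    fun q => div_pos (mul_pos (pow_pos (hrpos q) 2) (hμ2 q)) (pow_pos (hr'pos q) 2),
    fun q => div_pos (mul_pos (hrpos q) (hσ2 q)) (hr'pos q), ?_, ?_, ?_⟩
  · congr 1
    exact Finset.prod_congr rfl fun q _ => mul_div_cancel₀ _ (pow_pos (hr'pos q) 2).ne'
  · congr 1
    exact Finset.prod_congr rfl fun q _ => mul_div_cancel₀ _ (pow_pos (hr'pos q) 2).ne'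
  · intro p
    have hfac : ∀ q, (r' q : ℝ)^2 * ((r q : ℝ)^2 * μ2 q / (r' q : ℝ)^2)
        = (r q : ℝ)^2 * μ2 q := fun q => mul_div_cancel₀ _ (pow_pos (hr'pos q) 2).ne'
    have hmid : (r' p : ℝ) * ((r p : ℝ) * σ2 p / (r' p : ℝ)) = (r p : ℝ) * σ2 p := mul_div_cancel₀ _ (ne_of_gt (hr'pos p))
    constructor <;>
      · rw [hmid]
        congr 1
        exact Finset.prod_congr rfl fun q _ => hfac q
end

section
/- Let M ≥ 2, r_1,…,r_{M−1} ≥ 1 and N_1,…,N_M ≥ 1 be integers. Let (θ^{(1)}_{i,k}), (θ^{(p)}_{a,i,b}) for 2 ≤ p ≤ M−1, and (θ^{(M)}_{a,i}) be a mutually independent family of square-integrable real random variables, where i ranges over the mode-p physical index set {1,…,N_p} and a, b over the adjacent rank index sets, with mean μ_p and variance σ_p² for every entry of the p-th core. For a multi-index i = (i_1,…,i_M) define η_i = Σ_{k_1,…,k_{M−1}} θ^{(1)}_{i_1,k_1} θ^{(2)}_{k_1,i_2,k_2} ⋯ θ^{(M)}_{k_{M−1},i_M}. Then for any two multi-indices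 i, j with i_p = j_p for exactly one mode p (i.e., i_k ≠ j_k for all k ≠ p), Cov(η_i, η_j) = ( ∏_{ℓ=1}^{M−1} r_ℓ^{α_ℓ} ) · σ_p² · ∏_{k≠p} μ_k², where α_ℓ = 1 if ℓ = p−1 or ℓ = p, and α_ℓ = 2 otherwise. -/
open MeasureTheory ProbabilityTheory Finset

/-!
Expand both rate entries over bond configurations `k, k'`: the covariance becomes a double sum
of covariances of two products of core entries. By independence such a covariance vanishes
unless the two products share an entry. Since `i` and `j` agree only at mode `p`, the only
entry they can share is the mode-`p` one, which happens exactly when `k` and `k'` agree on the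
two links adjacent to `p`; that term is `σ_p² ∏_{q ≠ p} μ_q²`. Counting these pairs `(k, k')`
gives the rank factor: an adjacent link `ℓ` contributes `r ℓ`, every other link `r ℓ ^ 2`.
-/

namespace ProbabilityTheory

variable {Ω ι : Type*} [MeasurableSpace Ω] {P : Measure Ω} {X : ι → Ω → ℝ}

lemma covRV_eq_covariance [IsProbabilityMeasure P] {Y Z : Ω → ℝ} (hY : MemLp Y 2 P)
    (hZ : MemLp Z 2 P) : covRV P Y Z = cov[Y, Z; P] :=
  (covariance_eq_sub hY hZ).symm

lemma iIndepFun.integral_finset_prod (hX : iIndepFun X P)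
    (hm : ∀ i, AEStronglyMeasurable (X i) P) (s : Finset ι) :
    ∫ ω, ∏ i ∈ s, X i ω ∂P = ∏ i ∈ s, ∫ ω, X i ω ∂P := by
  simp_rw [← Finset.prod_coe_sort s]
  exact (hX.precomp Subtype.val_injective).integral_fun_prod_eq_prod_integral fun i => hm i

lemma iIndepFun.integrable_finset_prod (hX : iIndepFun X P)
    (hint : ∀ i, Integrable (X i) P) (s : Finset ι) :
    Integrable (fun ω => ∏ i ∈ s, X i ω) P := by
  have := hX.isProbabilityMeasure
  induction s using Finset.cons_induction with
  | empty => simp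
  | cons j s hj ih =>
    have hind := (hX.indepFun_finsetProd_of_notMem₀ (fun i => (hint i).aemeasurable) hj).symm
    simpa only [Finset.prod_cons, Pi.mul_def, Finset.prod_apply] using
      hind.integrable_mul (hint j) (by rwa [Finset.prod_fn])

lemma iIndepFun.memLp_two_finset_prod (hX : iIndepFun X P)
    (hX2 : ∀ i, MemLp (X i) 2 P) (s : Finset ι) :
    MemLp (fun ω => ∏ i ∈ s, X i ω) 2 P := by
  rw [memLp_two_iff_integrable_sq
    (Finset.aestronglyMeasurable_fun_prod s fun i _ => (hX2 i).aestronglyMeasurable)]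
  simp_rw [← Finset.prod_pow]
  exact (hX.comp (fun _ t => t ^ 2) fun _ => by fun_prop).integrable_finset_prod
    (fun i => (hX2 i).integrable_sq) s

lemma iIndepFun.indepFun_finset_prod_of_disjoint (hX : iIndepFun X P)
    (hm : ∀ i, AEMeasurable (X i) P) {S T : Finset ι} (hST : Disjoint S T) :
    IndepFun (fun ω => ∏ i ∈ S, X i ω) (fun ω => ∏ i ∈ T, X i ω) P := by
  simp_rw [← Finset.prod_coe_sort S, ← Finset.prod_coe_sort T]
  exact (hX.indepFun_finset₀ S T hST hm).comp (φ := fun v : S → ℝ => ∏ i, v i)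
    (ψ := fun v : T → ℝ => ∏ i, v i) (by fun_prop) (by fun_prop)

lemma iIndepFun.covariance_finset_prod_of_disjoint (hX : iIndepFun X P)
    (hX2 : ∀ i, MemLp (X i) 2 P) {S T : Finset ι} (hST : Disjoint S T) :
    cov[fun ω => ∏ i ∈ S, X i ω, fun ω => ∏ i ∈ T, X i ω; P] = 0 :=
  (hX.indepFun_finset_prod_of_disjoint (fun i => (hX2 i).aemeasurable) hST).covariance_eq_zero
    (hX.memLp_two_finset_prod hX2 S) (hX.memLp_two_finset_prod hX2 T)

lemma iIndepFun.covariance_mul_finset_prod_mul_finset_prod (hX : iIndepFun X P)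
    (hX2 : ∀ i, MemLp (X i) 2 P) {i₀ : ι} {S T : Finset ι} (hST : Disjoint S T)
    (hS : i₀ ∉ S) (hT : i₀ ∉ T) :
    cov[fun ω => X i₀ ω * ∏ i ∈ S, X i ω, fun ω => X i₀ ω * ∏ i ∈ T, X i ω; P] =
      variance (X i₀) P * (∏ i ∈ S, ∫ ω, X i ω ∂P) * ∏ i ∈ T, ∫ ω, X i ω ∂P := by
  classical
  have := hX.isProbabilityMeasure
  have hm i : AEStronglyMeasurable (X i) P := (hX2 i).aestronglyMeasurable
  have hmean : ∀ U, i₀ ∉ U →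
      ∫ ω, X i₀ ω * ∏ i ∈ U, X i ω ∂P = (∫ ω, X i₀ ω ∂P) * ∏ i ∈ U, ∫ ω, X i ω ∂P := by
    intro U hU
    simpa only [Finset.prod_insert hU] using hX.integral_finset_prod hm (insert i₀ U)
  have hmixed : ∫ ω, (X i₀ ω * ∏ i ∈ S, X i ω) * (X i₀ ω * ∏ i ∈ T, X i ω) ∂P =
      (∫ ω, X i₀ ω ^ 2 ∂P) * ((∏ i ∈ S, ∫ ω, X i ω ∂P) * ∏ i ∈ T, ∫ ω, X i ω ∂P) := by
    have hST₀ : i₀ ∉ S ∪ T := Finset.notMem_union.2 ⟨hS, hT⟩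
    have hind : IndepFun (fun ω => ∏ i ∈ S ∪ T, X i ω) (fun ω => X i₀ ω ^ 2) P := by
      simpa only [Function.comp_def, Finset.prod_apply, id] using
        (hX.indepFun_finsetProd_of_notMem₀ (fun i => (hm i).aemeasurable) hST₀).comp
          measurable_id (measurable_id.pow_const 2)
    calc ∫ ω, (X i₀ ω * ∏ i ∈ S, X i ω) * (X i₀ ω * ∏ i ∈ T, X i ω) ∂P
        = ∫ ω, (∏ i ∈ S ∪ T, X i ω) * X i₀ ω ^ 2 ∂P := by
          congr 1 with ω
          rw [Finset.prod_union hST]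
          ring
      _ = (∫ ω, X i₀ ω ^ 2 ∂P) * ((∏ i ∈ S, ∫ ω, X i ω ∂P) * ∏ i ∈ T, ∫ ω, X i ω ∂P) := by
          rw [hind.integral_fun_mul_eq_mul_integral (Finset.aestronglyMeasurable_fun_prod _
            fun i _ => hm i) ((hm i₀).pow 2), hX.integral_finset_prod hm, Finset.prod_union hST,
            mul_comm]
  have hins : ∀ U, i₀ ∉ U →
      (fun ω => X i₀ ω * ∏ i ∈ U, X i ω) = fun ω => ∏ i ∈ insert i₀ U, X i ω :=
    fun U hU => funext fun ω => (Finset.prod_insert (f := fun i => X i ω) hU).symm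
  rw [covariance_eq_sub (hins S hS ▸ hX.memLp_two_finset_prod hX2 _)
    (hins T hT ▸ hX.memLp_two_finset_prod hX2 _)]
  simp only [Pi.mul_apply]
  rw [hmixed, hmean S hS, hmean T hT, variance_eq_sub (hX2 i₀)]
  simp only [Pi.pow_apply]
  ring

end ProbabilityTheory

lemma Fintype.card_filter_forall_mem_eq {κ : Type*} [Fintype κ] [DecidableEq κ] {β : κ → Type*}
    [∀ ℓ, Fintype (β ℓ)] [∀ ℓ, DecidableEq (β ℓ)] (s : Finset κ) (k : ∀ ℓ, β ℓ) :
    #{k' : ∀ ℓ, β ℓ | ∀ ℓ ∈ s, k' ℓ = k ℓ} = ∏ ℓ ∈ sᶜ, Fintype.card (β ℓ) := by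
  have : ({k' : ∀ ℓ, β ℓ | ∀ ℓ ∈ s, k' ℓ = k ℓ} : Finset _) =
      Fintype.piFinset fun ℓ => if ℓ ∈ s then {k ℓ} else univ := by
    ext k'
    simp only [Finset.mem_filter, Finset.mem_univ, true_and, Fintype.mem_piFinset]
    refine forall_congr' fun ℓ => ?_
    split_ifs with h <;> simp [h]
  rw [this, Fintype.card_piFinset, ← Finset.prod_compl_mul_prod s]
  have hs : ∏ ℓ ∈ s, #(if ℓ ∈ s then {k ℓ} else univ) = 1 :=
    Finset.prod_eq_one fun ℓ hℓ => by rw [if_pos hℓ, Finset.card_singleton]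
  rw [hs, mul_one]
  exact Finset.prod_congr rfl fun ℓ hℓ => by
    rw [if_neg (Finset.mem_compl.1 hℓ), Finset.card_univ]

abbrev TTIndex (M : ℕ) (r N : ℕ → ℕ) : Type :=
  (p : Fin M) × Fin (r p) × Fin (N p) × Fin (r (p + 1))

section TensorTrain

variable {M : ℕ} {r N : ℕ → ℕ}

/-- Modes are indexed from `0`; a bond configuration `k` gives a rank index on each of the
`M + 1` links, where links `0` and `M` are the boundary links of rank one. -/
def ttCoreEntry (k : (ℓ : Fin (M + 1)) → Fin (r ℓ))
    (i : (q : Fin M) → Fin (N q)) : Fin M ↪ TTIndex M r N where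
  toFun q := ⟨q, k q.castSucc, i q, k q.succ⟩
  inj' _ _ h := congrArg Sigma.fst h

lemma prod_mul_prod_compl_links (hr0 : r 0 = 1) (hrM : r M = 1) (p : Fin M) :
    (∏ ℓ : Fin (M + 1), r ℓ) * ∏ ℓ ∈ {p.castSucc, p.succ}ᶜ, r ℓ =
      ∏ ℓ ∈ Ico 1 M, r ℓ ^ (if ℓ = p ∨ ℓ = p + 1 then 1 else 2) := by
  have hlink (ℓ : Fin (M + 1)) :
      ℓ ∈ ({p.castSucc, p.succ} : Finset _) ↔ ((ℓ : ℕ) = p ∨ (ℓ : ℕ) = p + 1) := by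
    simp [Fin.ext_iff]
  rw [← Finset.univ_inter {p.castSucc, p.succ}ᶜ, ← Finset.prod_ite_mem,
    ← Finset.prod_mul_distrib]
  trans ∏ ℓ : Fin (M + 1), r ℓ ^ (if (ℓ : ℕ) = p ∨ (ℓ : ℕ) = p + 1 then 1 else 2)
  · refine Finset.prod_congr rfl fun ℓ _ => ?_
    simp only [Finset.mem_compl, hlink]
    split_ifs <;> ring
  rw [Fin.prod_univ_eq_prod_range (fun ℓ => r ℓ ^ (if ℓ = p ∨ ℓ = p + 1 then 1 else 2)),
    Finset.prod_range_succ, Finset.range_eq_Ico, Finset.prod_eq_prod_Ico_succ_bot p.pos, hr0, hrM]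
  simp

@[simp]
lemma ttCoreEntry_apply (k : (ℓ : Fin (M + 1)) → Fin (r ℓ)) (i : (q : Fin M) → Fin (N q))
    (q : Fin M) : ttCoreEntry k i q = ⟨q, k q.castSucc, i q, k q.succ⟩ :=
  rfl

lemma ttCoreEntry_eq_ttCoreEntry_iff {k k' : (ℓ : Fin (M + 1)) → Fin (r ℓ)}
    {i j : (q : Fin M) → Fin (N q)} {q q' : Fin M} :
    ttCoreEntry k i q = ttCoreEntry k' j q' ↔
      q = q' ∧ k q.castSucc = k' q.castSucc ∧ i q = j q ∧ k q.succ = k' q.succ := by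
  constructor
  · intro h
    obtain rfl : q = q' := congrArg Sigma.fst h
    simpa using h
  · rintro ⟨rfl, h₁, h₂, h₃⟩
    simp [h₁, h₂, h₃]

lemma disjoint_map_ttCoreEntry {k k' : (ℓ : Fin (M + 1)) → Fin (r ℓ)}
    {i j : (q : Fin M) → Fin (N q)} {s : Finset (Fin M)}
    (h : ∀ q ∈ s, ¬(k q.castSucc = k' q.castSucc ∧ i q = j q ∧ k q.succ = k' q.succ)) :
    Disjoint (s.map (ttCoreEntry k i)) (s.map (ttCoreEntry k' j)) := by
  simp only [Finset.disjoint_left, Finset.mem_map]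
  rintro _ ⟨q, hq, rfl⟩ ⟨q', -, hq'⟩
  obtain ⟨rfl, h₁, h₂, h₃⟩ := ttCoreEntry_eq_ttCoreEntry_iff.1 hq'
  exact h q' hq ⟨h₁.symm, h₂.symm, h₃.symm⟩

variable {Ω : Type*} [MeasurableSpace Ω] {P : Measure Ω} {X : TTIndex M r N → Ω → ℝ}

lemma covariance_prod_ttCoreEntry (hX : iIndepFun X P) (hX2 : ∀ x, MemLp (X x) 2 P)
    {μ σ2 : Fin M → ℝ} (hmean : ∀ x, ∫ ω, X x ω ∂P = μ x.1)
    (hvar : ∀ x, variance (X x) P = σ2 x.1) {i j : (q : Fin M) → Fin (N q)} {p : Fin M}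
    (hshare : i p = j p) (hdiff : ∀ q, q ≠ p → i q ≠ j q) (k k' : (ℓ : Fin (M + 1)) → Fin (r ℓ)) :
    cov[fun ω => ∏ q, X (ttCoreEntry k i q) ω, fun ω => ∏ q, X (ttCoreEntry k' j q) ω; P] =
      if k p.castSucc = k' p.castSucc ∧ k p.succ = k' p.succ then
        σ2 p * ∏ q ∈ univ.erase p, μ q ^ 2
      else 0 := by
  have hmean_map : ∀ v : (q : Fin M) → Fin (N q), ∀ (k : (ℓ : Fin (M + 1)) → Fin (r ℓ)) s,
      ∏ x ∈ s.map (ttCoreEntry k v), ∫ ω, X x ω ∂P = ∏ q ∈ s, μ q := fun v k s => by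
    simp [hmean]
  split_ifs with hlinks
  · have hentry : ttCoreEntry k' j p = ttCoreEntry k i p :=
      ttCoreEntry_eq_ttCoreEntry_iff.2 ⟨rfl, hlinks.1.symm, hshare.symm, hlinks.2.symm⟩
    have hsplit : ∀ (v : (q : Fin M) → Fin (N q)) (k : (ℓ : Fin (M + 1)) → Fin (r ℓ)),
        (fun ω => ∏ q, X (ttCoreEntry k v q) ω) =
          fun ω => X (ttCoreEntry k v p) ω * ∏ x ∈ (univ.erase p).map (ttCoreEntry k v), X x ω :=
      fun v k => funext fun ω => by
        rw [Finset.prod_map,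
          Finset.mul_prod_erase _ (fun q => X (ttCoreEntry k v q) ω) (mem_univ p)]
    have hnotMem : ∀ (v : (q : Fin M) → Fin (N q)) (k : (ℓ : Fin (M + 1)) → Fin (r ℓ)),
        ttCoreEntry k v p ∉ (univ.erase p).map (ttCoreEntry k v) := fun v k => by
      simp
    rw [hsplit i k, hsplit j k', hentry,
      hX.covariance_mul_finset_prod_mul_finset_prod hX2
        (disjoint_map_ttCoreEntry fun q hq h => hdiff q (Finset.ne_of_mem_erase hq) h.2.1)
        (hnotMem i k) (hentry ▸ hnotMem j k'),
      hvar, hmean_map, hmean_map, Finset.prod_pow, show (ttCoreEntry k i p).1 = p from rfl]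
    ring
  · have hmap : ∀ (v : (q : Fin M) → Fin (N q)) (k : (ℓ : Fin (M + 1)) → Fin (r ℓ)),
        (fun ω => ∏ q, X (ttCoreEntry k v q) ω) =
          fun ω => ∏ x ∈ univ.map (ttCoreEntry k v), X x ω :=
      fun v k => funext fun ω => (Finset.prod_map univ (ttCoreEntry k v) fun x => X x ω).symm
    rw [hmap i k, hmap j k']
    refine hX.covariance_finset_prod_of_disjoint hX2 (disjoint_map_ttCoreEntry fun q _ h => ?_)
    by_cases hq : q = p
    · subst hq
      exact hlinks ⟨h.1, h.2.2⟩
    · exact hdiff q hq h.2.1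

end TensorTrain

theorem tt_singleton_covariance_general
    {Ω : Type*} [MeasurableSpace Ω] (P : Measure Ω)
    (M : ℕ)
    (r : ℕ → ℕ) (hr0 : r 0 = 1) (hrM : r M = 1)
    (N : ℕ → ℕ)
    (θ : (p : ℕ) → Fin (r p) → Fin (N p) → Fin (r (p + 1)) → Ω → ℝ)
    (hL2 : ∀ p a i b, MemLp (θ p a i b) 2 P)
    (hIndep : iIndepFun
      (fun x : ((p : Fin M) × Fin (r p) × Fin (N p) × Fin (r (p + 1))) =>
        θ x.1 x.2.1 x.2.2.1 x.2.2.2) P)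
    (μm σ2 : ℕ → ℝ)
    (hmean : ∀ p, p < M → ∀ a i b, ∫ ω, θ p a i b ω ∂P = μm p)
    (hvar : ∀ p, p < M → ∀ a i b, variance (θ p a i b) P = σ2 p)
    (i j : (q : Fin M) → Fin (N q))
    (p : Fin M) (hshare : i p = j p) (hdiff : ∀ k, k ≠ p → i k ≠ j k) :
    covRV P
        (fun ω => ∑ k : (ℓ : Fin (M + 1)) → Fin (r ℓ),
          ∏ q : Fin M, θ q (k q.castSucc) (i q) (k q.succ) ω)
        (fun ω => ∑ k : (ℓ : Fin (M + 1)) → Fin (r ℓ),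
          ∏ q : Fin M, θ q (k q.castSucc) (j q) (k q.succ) ω)
      = (∏ ℓ ∈ Finset.Ico 1 M,
            (r ℓ : ℝ) ^ (if ℓ = (p : ℕ) ∨ ℓ = (p : ℕ) + 1 then 1 else 2)) *
          σ2 p * ∏ k ∈ Finset.univ.erase p, μm (k : ℕ) ^ 2 := by
  have := hIndep.isProbabilityMeasure
  set X : TTIndex M r N → Ω → ℝ := fun x => θ x.1 x.2.1 x.2.2.1 x.2.2.2
  have hX2 : ∀ x, MemLp (X x) 2 P := fun x => hL2 _ _ _ _
  have hpath : ∀ (v : (q : Fin M) → Fin (N q)) (k : (ℓ : Fin (M + 1)) → Fin (r ℓ)),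
      MemLp (fun ω => ∏ q, X (ttCoreEntry k v q) ω) 2 P := fun v k => by
    simpa only [Finset.prod_map] using
      hIndep.memLp_two_finset_prod hX2 (univ.map (ttCoreEntry k v))
  have hcount : ∀ k : (ℓ : Fin (M + 1)) → Fin (r ℓ),
      #{k' : (ℓ : Fin (M + 1)) → Fin (r ℓ) |
          k p.castSucc = k' p.castSucc ∧ k p.succ = k' p.succ} =
        ∏ ℓ ∈ {p.castSucc, p.succ}ᶜ, r ℓ := fun k => by
    have hcard := Fintype.card_filter_forall_mem_eq {p.castSucc, p.succ} k
    simp only [Fintype.card_fin] at hcard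
    rw [← hcard]
    congr 1
    ext k'
    simp [eq_comm]
  change covRV P (fun ω => ∑ k, ∏ q, X (ttCoreEntry k i q) ω)
    (fun ω => ∑ k, ∏ q, X (ttCoreEntry k j q) ω) = _
  rw [covRV_eq_covariance (memLp_finsetSum _ fun k _ => hpath i k)
      (memLp_finsetSum _ fun k _ => hpath j k),
    covariance_fun_sum_fun_sum (hpath i) (hpath j)]
  simp_rw [covariance_prod_ttCoreEntry hIndep hX2 (μ := fun q => μm q) (σ2 := fun q => σ2 q)
    (fun x => hmean x.1 x.1.isLt _ _ _) (fun x => hvar x.1 x.1.isLt _ _ _) hshare hdiff]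
  simp only [← Finset.sum_filter, Finset.sum_const, hcount, Finset.card_univ, nsmul_eq_mul,
    Fintype.card_pi, Fintype.card_fin]
  rw [← mul_assoc, ← Nat.cast_mul, prod_mul_prod_compl_links hr0 hrM p]
  push_cast
  ring

/-- Exact-sharing singleton covariance of the Tensor Train model with TT-ranks
`(r 1, …, r (M−1))` (boundary ranks `r 0 = r M = 1`): all core entries
`θ p a i b` (left rank `a`, physical index `i`, right rank `b`) are jointly
independent and square integrable with moments `(μm p, σ2 p)`.  For rate
entries `η i = ∑ k, ∏ q, θ q (k q) (i q) (k (q+1))` and two multi-indices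
`i, j` sharing exactly the single mode `p`, the covariance equals
`(∏_{ℓ=1}^{M−1} r ℓ ^ α ℓ) * σ p² * ∏_{k≠p} μ k²`, where `α ℓ = 1` if the
link `ℓ` is adjacent to the shared mode and `α ℓ = 2` otherwise. -/
theorem tt_singleton_covariance
    {Ω : Type*} [MeasurableSpace Ω] (P : Measure Ω) [IsProbabilityMeasure P]
    (M : ℕ) (hM : 2 ≤ M)
    (r : ℕ → ℕ) (hr0 : r 0 = 1) (hrM : r M = 1)
    (hr : ∀ ℓ, 1 ≤ ℓ → ℓ ≤ M - 1 → 1 ≤ r ℓ)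
    (N : ℕ → ℕ) (hN : ∀ p, p < M → 1 ≤ N p)
    (θ : (p : ℕ) → Fin (r p) → Fin (N p) → Fin (r (p + 1)) → Ω → ℝ)
    (hL2 : ∀ p a i b, MemLp (θ p a i b) 2 P)
    (hIndep : iIndepFun
      (fun x : ((p : Fin M) × Fin (r p) × Fin (N p) × Fin (r (p + 1))) =>
        θ x.1 x.2.1 x.2.2.1 x.2.2.2) P)
    (μm σ2 : ℕ → ℝ)
    (hmean : ∀ p, p < M → ∀ a i b, ∫ ω, θ p a i b ω ∂P = μm p)
    (hvar : ∀ p, p < M → ∀ a i b, variance (θ p a i b) P = σ2 p)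
    (i j : (q : Fin M) → Fin (N q))
    (p : Fin M) (hshare : i p = j p) (hdiff : ∀ k, k ≠ p → i k ≠ j k) :
    covRV P
        (fun ω => ∑ k : (ℓ : Fin (M + 1)) → Fin (r ℓ),
          ∏ q : Fin M, θ q (k q.castSucc) (i q) (k q.succ) ω)
        (fun ω => ∑ k : (ℓ : Fin (M + 1)) → Fin (r ℓ),
          ∏ q : Fin M, θ q (k q.castSucc) (j q) (k q.succ) ω)
      = (∏ ℓ ∈ Finset.Ico 1 M,
            (r ℓ : ℝ) ^ (if ℓ = (p : ℕ) ∨ ℓ = (p : ℕ) + 1 then 1 else 2)) *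
          σ2 p * ∏ k ∈ Finset.univ.erase p, μm (k : ℕ) ^ 2 :=
  tt_singleton_covariance_general P M r hr0 hrM N θ hL2 hIndep μm σ2 hmean hvar i j p hshare hdiff
end

section
/- Let M ≥ 3 be an integer, r_1,…,r_{M−1} positive reals, μ_1,…,μ_M nonzero reals, and σ_1²,…,σ_M² positive reals. For S ⊆ {1,…,M} define v_S = (∏_{ℓ=1}^{M−1} r_ℓ^{α_ℓ(S)}) · (∏_{p∈S} σ_p²) · (∏_{p∉S} μ_p²), where α_ℓ(S) = 1 if ℓ ∈ S or ℓ+1 ∈ S, and α_ℓ(S) = 2 otherwise. Then r_1 = (v_{{1,2}} · v_{{3}}) / (v_{{2}} · v_{{1,3}}). -/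
/-- The TT pure interaction term for an exact-sharing pattern `S ⊆ {1,…,M}`:
`v S = (∏_{ℓ=1}^{M−1} r ℓ ^ α ℓ S) * (∏_{p∈S} σ p²) * (∏_{p∈{1,…,M}∖S} μ p²)`,
where `α ℓ S = 1` if `ℓ ∈ S` or `ℓ+1 ∈ S`, and `α ℓ S = 2` otherwise. -/
noncomputable def vTT (M : ℕ) (r μ σ2 : ℕ → ℝ) (S : Finset ℕ) : ℝ :=
  (∏ ℓ ∈ Finset.Ico 1 M, r ℓ ^ (if ℓ ∈ S ∨ ℓ + 1 ∈ S then 1 else 2)) *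
    (∏ p ∈ S, σ2 p) * ∏ p ∈ Finset.Icc 1 M \ S, μ p ^ 2

/-- Closed-form left-boundary TT rank estimator:
`r 1 = (v {1,2} · v {3}) / (v {2} · v {1,3})`. -/
theorem tt_left_boundary_rank_estimator
    (M : ℕ) (hM : 3 ≤ M)
    (r : ℕ → ℝ) (hr : ∀ ℓ ∈ Finset.Ico 1 M, 0 < r ℓ)
    (μ : ℕ → ℝ) (hμ : ∀ p ∈ Finset.Icc 1 M, μ p ≠ 0)
    (σ2 : ℕ → ℝ) (hσ : ∀ p ∈ Finset.Icc 1 M, 0 < σ2 p) :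
    r 1 = vTT M r μ σ2 {1, 2} * vTT M r μ σ2 {3}
        / (vTT M r μ σ2 {2} * vTT M r μ σ2 {1, 3}) := by
  have h1 : (1:ℕ) ∈ Finset.Ico 1 M := by simp; omega
  have hr1 : 0 < r 1 := hr 1 h1
  -- exponent functions
  set e1 : ℕ → ℕ := fun ℓ =>
    (if ℓ ∈ ({1,2} : Finset ℕ) ∨ ℓ + 1 ∈ ({1,2} : Finset ℕ) then 1 else 2) +
    (if ℓ ∈ ({3} : Finset ℕ) ∨ ℓ + 1 ∈ ({3} : Finset ℕ) then 1 else 2) with he1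
  set e2 : ℕ → ℕ := fun ℓ =>
    (if ℓ ∈ ({2} : Finset ℕ) ∨ ℓ + 1 ∈ ({2} : Finset ℕ) then 1 else 2) +
    (if ℓ ∈ ({1,3} : Finset ℕ) ∨ ℓ + 1 ∈ ({1,3} : Finset ℕ) then 1 else 2) with he2
  -- rank product identity
  have hP : (∏ ℓ ∈ Finset.Ico 1 M, r ℓ ^ e1 ℓ)
      = r 1 * ∏ ℓ ∈ Finset.Ico 1 M, r ℓ ^ e2 ℓ := by
    rw [← Finset.mul_prod_erase _ _ h1, ← Finset.mul_prod_erase _ _ h1]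
    have hcongr : ∏ ℓ ∈ (Finset.Ico 1 M).erase 1, r ℓ ^ e1 ℓ
        = ∏ ℓ ∈ (Finset.Ico 1 M).erase 1, r ℓ ^ e2 ℓ := by
      apply Finset.prod_congr rfl
      intro ℓ hℓ
      have h1ℓ : ℓ ≠ 1 := (Finset.mem_erase.mp hℓ).1
      have h2ℓ : 1 ≤ ℓ := (Finset.mem_Ico.mp (Finset.mem_erase.mp hℓ).2).1
      congr 1
      simp only [he1, he2, Finset.mem_insert, Finset.mem_singleton]
      split_ifs <;> omega
    rw [hcongr]
    have hv1 : e1 1 = 3 := by simp [he1]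
    have hv2 : e2 1 = 2 := by simp [he2]
    rw [hv1, hv2]; ring
  -- sigma parts
  have hne12 : (1:ℕ) ≠ 2 := by norm_num
  have hS : (∏ p ∈ ({1,2} : Finset ℕ), σ2 p) * (∏ p ∈ ({3} : Finset ℕ), σ2 p)
      = (∏ p ∈ ({2} : Finset ℕ), σ2 p) * (∏ p ∈ ({1,3} : Finset ℕ), σ2 p) := by
    simp [Finset.prod_pair]; ring
  -- mu parts
  have hsub : ∀ S : Finset ℕ, S ⊆ ({1,2,3} : Finset ℕ) → S ⊆ Finset.Icc 1 M := by
    intro S hS x hx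
    have := hS hx
    simp only [Finset.mem_insert, Finset.mem_singleton] at this
    simp only [Finset.mem_Icc]
    omega
  have hMu : ∀ S : Finset ℕ, S ⊆ ({1,2,3} : Finset ℕ) →
      (∏ p ∈ Finset.Icc 1 M \ S, μ p ^ 2) * (∏ p ∈ S, μ p ^ 2)
        = ∏ p ∈ Finset.Icc 1 M, μ p ^ 2 := fun S h => Finset.prod_sdiff (hsub S h)
  have hM1 := hMu {1,2} (by intro x; simp; tauto)
  have hM2 := hMu {3} (by intro x; simp; tauto)
  have hM3 := hMu {2} (by intro x; simp; tauto)
  have hM4 := hMu {1,3} (by intro x; simp; tauto)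
  -- numeric nonvanishing
  have hμ' : ∀ p ∈ ({1,2,3} : Finset ℕ), μ p ≠ 0 := by
    intro p hp; exact hμ p (hsub _ (by rfl) hp)
  have hμ1 : μ 1 ≠ 0 := hμ' 1 (by simp)
  have hμ2 : μ 2 ≠ 0 := hμ' 2 (by simp)
  have hμ3 : μ 3 ≠ 0 := hμ' 3 (by simp)
  have hMu' : (∏ p ∈ Finset.Icc 1 M \ ({1,2} : Finset ℕ), μ p ^ 2) *
      (∏ p ∈ Finset.Icc 1 M \ ({3} : Finset ℕ), μ p ^ 2)
      = (∏ p ∈ Finset.Icc 1 M \ ({2} : Finset ℕ), μ p ^ 2) *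
      (∏ p ∈ Finset.Icc 1 M \ ({1,3} : Finset ℕ), μ p ^ 2) := by
    have key : (μ 1 ^ 2 * μ 2 ^ 2 * μ 3 ^ 2) ≠ 0 := by positivity
    apply mul_right_cancel₀ key
    have e1' : (∏ p ∈ ({1,2} : Finset ℕ), μ p ^ 2) = μ 1 ^ 2 * μ 2 ^ 2 := by
      simp [Finset.prod_pair]
    have e2' : (∏ p ∈ ({3} : Finset ℕ), μ p ^ 2) = μ 3 ^ 2 := by simp
    have e3' : (∏ p ∈ ({2} : Finset ℕ), μ p ^ 2) = μ 2 ^ 2 := by simp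
    have e4' : (∏ p ∈ ({1,3} : Finset ℕ), μ p ^ 2) = μ 1 ^ 2 * μ 3 ^ 2 := by
      simp [Finset.prod_pair]
    calc (∏ p ∈ Finset.Icc 1 M \ ({1,2} : Finset ℕ), μ p ^ 2) *
          (∏ p ∈ Finset.Icc 1 M \ ({3} : Finset ℕ), μ p ^ 2) *
          (μ 1 ^ 2 * μ 2 ^ 2 * μ 3 ^ 2)
        = ((∏ p ∈ Finset.Icc 1 M \ ({1,2} : Finset ℕ), μ p ^ 2) *
            (∏ p ∈ ({1,2} : Finset ℕ), μ p ^ 2)) *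
          ((∏ p ∈ Finset.Icc 1 M \ ({3} : Finset ℕ), μ p ^ 2) *
            (∏ p ∈ ({3} : Finset ℕ), μ p ^ 2)) := by rw [e1', e2']; ring
      _ = (∏ p ∈ Finset.Icc 1 M, μ p ^ 2) * (∏ p ∈ Finset.Icc 1 M, μ p ^ 2) := by
            rw [hM1, hM2]
      _ = ((∏ p ∈ Finset.Icc 1 M \ ({2} : Finset ℕ), μ p ^ 2) *
            (∏ p ∈ ({2} : Finset ℕ), μ p ^ 2)) *
          ((∏ p ∈ Finset.Icc 1 M \ ({1,3} : Finset ℕ), μ p ^ 2) *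
            (∏ p ∈ ({1,3} : Finset ℕ), μ p ^ 2)) := by rw [hM3, hM4]
      _ = _ := by rw [e3', e4']; ring
  -- nonzero of v's
  have hrpos : ∀ (f : ℕ → ℕ) (S : Finset ℕ), (0:ℝ) < ∏ ℓ ∈ Finset.Ico 1 M,
      r ℓ ^ (if ℓ ∈ S ∨ ℓ + 1 ∈ S then 1 else 2) := by
    intro f S
    apply Finset.prod_pos
    intro ℓ hℓ
    exact pow_pos (hr ℓ hℓ) _
  have hσpos : ∀ S : Finset ℕ, S ⊆ ({1,2,3} : Finset ℕ) → (0:ℝ) < ∏ p ∈ S, σ2 p := by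
    intro S h
    apply Finset.prod_pos
    intro p hp; exact hσ p (hsub S h hp)
  have hμpos : ∀ S : Finset ℕ, (∏ p ∈ Finset.Icc 1 M \ S, μ p ^ 2) ≠ 0 := by
    intro S
    apply Finset.prod_ne_zero_iff.mpr
    intro p hp
    exact pow_ne_zero _ (hμ p (Finset.mem_sdiff.mp hp).1)
  have hv3 : vTT M r μ σ2 {2} ≠ 0 := by
    unfold vTT
    exact mul_ne_zero (mul_ne_zero (ne_of_gt (hrpos id _))
      (ne_of_gt (hσpos {2} (by intro x; simp; tauto)))) (hμpos _)
  have hv4 : vTT M r μ σ2 {1,3} ≠ 0 := by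
    unfold vTT
    exact mul_ne_zero (mul_ne_zero (ne_of_gt (hrpos id _))
      (ne_of_gt (hσpos {1,3} (by intro x; simp; tauto)))) (hμpos _)
  rw [eq_div_iff (mul_ne_zero hv3 hv4)]
  unfold vTT
  symm
  have expand : ∀ S T : Finset ℕ,
      (∏ ℓ ∈ Finset.Ico 1 M, r ℓ ^ (if ℓ ∈ S ∨ ℓ + 1 ∈ S then 1 else 2)) *
      (∏ ℓ ∈ Finset.Ico 1 M, r ℓ ^ (if ℓ ∈ T ∨ ℓ + 1 ∈ T then 1 else 2))
      = ∏ ℓ ∈ Finset.Ico 1 M, r ℓ ^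
        ((if ℓ ∈ S ∨ ℓ + 1 ∈ S then 1 else 2) + (if ℓ ∈ T ∨ ℓ + 1 ∈ T then 1 else 2)) := by
    intro S T
    rw [← Finset.prod_mul_distrib]
    exact Finset.prod_congr rfl fun ℓ _ => (pow_add _ _ _).symm
  calc (∏ ℓ ∈ Finset.Ico 1 M, r ℓ ^ (if ℓ ∈ ({1,2}:Finset ℕ) ∨ ℓ + 1 ∈ ({1,2}:Finset ℕ) then 1 else 2)) *
        (∏ p ∈ ({1,2}:Finset ℕ), σ2 p) * (∏ p ∈ Finset.Icc 1 M \ ({1,2}:Finset ℕ), μ p ^ 2) *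
        ((∏ ℓ ∈ Finset.Ico 1 M, r ℓ ^ (if ℓ ∈ ({3}:Finset ℕ) ∨ ℓ + 1 ∈ ({3}:Finset ℕ) then 1 else 2)) *
        (∏ p ∈ ({3}:Finset ℕ), σ2 p) * (∏ p ∈ Finset.Icc 1 M \ ({3}:Finset ℕ), μ p ^ 2))
      = (∏ ℓ ∈ Finset.Ico 1 M, r ℓ ^ e1 ℓ) *
        ((∏ p ∈ ({1,2}:Finset ℕ), σ2 p) * (∏ p ∈ ({3}:Finset ℕ), σ2 p)) *
        ((∏ p ∈ Finset.Icc 1 M \ ({1,2}:Finset ℕ), μ p ^ 2) *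
         (∏ p ∈ Finset.Icc 1 M \ ({3}:Finset ℕ), μ p ^ 2)) := by
          rw [← expand]; ring
    _ = r 1 * ((∏ ℓ ∈ Finset.Ico 1 M, r ℓ ^ e2 ℓ) *
        ((∏ p ∈ ({2}:Finset ℕ), σ2 p) * (∏ p ∈ ({1,3}:Finset ℕ), σ2 p)) *
        ((∏ p ∈ Finset.Icc 1 M \ ({2}:Finset ℕ), μ p ^ 2) *
         (∏ p ∈ Finset.Icc 1 M \ ({1,3}:Finset ℕ), μ p ^ 2))) := by
          rw [hP, hS, hMu']; ring
    _ = _ := by rw [← expand]; ring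
end

section
/- Let M ≥ 4 be an integer, r_1,…,r_{M−1} positive reals, μ_1,…,μ_M nonzero reals, and σ_1²,…,σ_M² positive reals. For S ⊆ {1,…,M} define v_S = (∏_{ℓ=1}^{M−1} r_ℓ^{α_ℓ(S)}) · (∏_{p∈S} σ_p²) · (∏_{p∉S} μ_p²), where α_ℓ(S) = 1 if ℓ ∈ S or ℓ+1 ∈ S, and α_ℓ(S) = 2 otherwise. Then r_{M−1} = (v_{{M−1,M}} · v_{{M−3}}) / (v_{{M}} · v_{{M−3,M−1}}). -/
lemma vTT_eq (M : ℕ) (r μ σ2 : ℕ → ℝ) (S : Finset ℕ) (hS : S ⊆ Finset.Icc 1 M) :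
    vTT M r μ σ2 S =
      (∏ ℓ ∈ Finset.Ico 1 M, r ℓ ^ (if ℓ ∈ S ∨ ℓ + 1 ∈ S then 1 else 2)) *
        ∏ p ∈ Finset.Icc 1 M, (if p ∈ S then σ2 p else μ p ^ 2) := by
  unfold vTT
  rw [mul_assoc]
  congr 1
  rw [Finset.prod_ite, Finset.filter_mem_eq_inter,
    Finset.inter_eq_right.mpr hS, ← Finset.sdiff_eq_filter]

lemma vTT_pos (M : ℕ) (r μ σ2 : ℕ → ℝ)
    (hr : ∀ ℓ ∈ Finset.Ico 1 M, 0 < r ℓ)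
    (hμ : ∀ p ∈ Finset.Icc 1 M, μ p ≠ 0)
    (hσ : ∀ p ∈ Finset.Icc 1 M, 0 < σ2 p)
    (S : Finset ℕ) (hS : S ⊆ Finset.Icc 1 M) :
    0 < vTT M r μ σ2 S := by
  rw [vTT_eq M r μ σ2 S hS]
  apply mul_pos
  · exact Finset.prod_pos fun ℓ hℓ => pow_pos (hr ℓ hℓ) _
  · refine Finset.prod_pos fun p hp => ?_
    split_ifs
    · exact hσ p hp
    · exact pow_two_pos_of_ne_zero (hμ p hp)

/-- Closed-form right-boundary TT rank estimator:
`r (M−1) = (v {M−1,M} · v {M−3}) / (v {M} · v {M−3,M−1})`. -/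
theorem tt_right_boundary_rank_estimator
    (M : ℕ) (hM : 4 ≤ M)
    (r : ℕ → ℝ) (hr : ∀ ℓ ∈ Finset.Ico 1 M, 0 < r ℓ)
    (μ : ℕ → ℝ) (hμ : ∀ p ∈ Finset.Icc 1 M, μ p ≠ 0)
    (σ2 : ℕ → ℝ) (hσ : ∀ p ∈ Finset.Icc 1 M, 0 < σ2 p) :
    r (M - 1) = vTT M r μ σ2 {M - 1, M} * vTT M r μ σ2 {M - 3}
        / (vTT M r μ σ2 {M} * vTT M r μ σ2 {M - 3, M - 1}) := by
  have hS1 : ({M - 1, M} : Finset ℕ) ⊆ Finset.Icc 1 M := by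
    intro x hx; simp only [Finset.mem_insert, Finset.mem_singleton] at hx
    simp only [Finset.mem_Icc]; omega
  have hS2 : ({M - 3} : Finset ℕ) ⊆ Finset.Icc 1 M := by
    intro x hx; simp only [Finset.mem_singleton] at hx
    simp only [Finset.mem_Icc]; omega
  have hS3 : ({M} : Finset ℕ) ⊆ Finset.Icc 1 M := by
    intro x hx; simp only [Finset.mem_singleton] at hx
    simp only [Finset.mem_Icc]; omega
  have hS4 : ({M - 3, M - 1} : Finset ℕ) ⊆ Finset.Icc 1 M := by
    intro x hx; simp only [Finset.mem_insert, Finset.mem_singleton] at hx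
    simp only [Finset.mem_Icc]; omega
  have h3 := vTT_pos M r μ σ2 hr hμ hσ _ hS3
  have h4 := vTT_pos M r μ σ2 hr hμ hσ _ hS4
  rw [eq_div_iff (by positivity)]
  rw [vTT_eq M r μ σ2 _ hS1, vTT_eq M r μ σ2 _ hS2,
    vTT_eq M r μ σ2 _ hS3, vTT_eq M r μ σ2 _ hS4]
  have hrM : r (M - 1) = ∏ ℓ ∈ Finset.Ico 1 M, r ℓ ^ (if ℓ = M - 1 then 1 else 0) := by
    rw [Finset.prod_eq_single_of_mem (M - 1) (by simp only [Finset.mem_Ico]; omega)]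
    · simp
    · intro b _ hb; simp [hb]
  rw [hrM]
  have hR : (∏ ℓ ∈ Finset.Ico 1 M, r ℓ ^ (if ℓ = M - 1 then 1 else 0)) *
      ((∏ ℓ ∈ Finset.Ico 1 M, r ℓ ^ (if ℓ ∈ ({M} : Finset ℕ) ∨ ℓ + 1 ∈ ({M} : Finset ℕ) then 1 else 2)) *
       (∏ ℓ ∈ Finset.Ico 1 M, r ℓ ^ (if ℓ ∈ ({M - 3, M - 1} : Finset ℕ) ∨ ℓ + 1 ∈ ({M - 3, M - 1} : Finset ℕ) then 1 else 2))) =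
      (∏ ℓ ∈ Finset.Ico 1 M, r ℓ ^ (if ℓ ∈ ({M - 1, M} : Finset ℕ) ∨ ℓ + 1 ∈ ({M - 1, M} : Finset ℕ) then 1 else 2)) *
      (∏ ℓ ∈ Finset.Ico 1 M, r ℓ ^ (if ℓ ∈ ({M - 3} : Finset ℕ) ∨ ℓ + 1 ∈ ({M - 3} : Finset ℕ) then 1 else 2)) := by
    rw [← Finset.prod_mul_distrib, ← Finset.prod_mul_distrib, ← Finset.prod_mul_distrib]
    refine Finset.prod_congr rfl fun ℓ hℓ => ?_
    simp only [Finset.mem_Ico] at hℓ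
    simp only [Finset.mem_insert, Finset.mem_singleton]
    have hpos : 0 < r ℓ := hr ℓ (by simp only [Finset.mem_Ico]; omega)
    rw [← pow_add, ← pow_add, ← pow_add]
    congr 1
    split_ifs <;> omega
  have hQ : (∏ p ∈ Finset.Icc 1 M, (if p ∈ ({M} : Finset ℕ) then σ2 p else μ p ^ 2)) *
      (∏ p ∈ Finset.Icc 1 M, (if p ∈ ({M - 3, M - 1} : Finset ℕ) then σ2 p else μ p ^ 2)) =
      (∏ p ∈ Finset.Icc 1 M, (if p ∈ ({M - 1, M} : Finset ℕ) then σ2 p else μ p ^ 2)) *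
      (∏ p ∈ Finset.Icc 1 M, (if p ∈ ({M - 3} : Finset ℕ) then σ2 p else μ p ^ 2)) := by
    rw [← Finset.prod_mul_distrib, ← Finset.prod_mul_distrib]
    refine Finset.prod_congr rfl fun p hp => ?_
    simp only [Finset.mem_Icc] at hp
    simp only [Finset.mem_insert, Finset.mem_singleton]
    split_ifs <;>
      first
      | (exfalso; omega)
      | ring
  calc (∏ ℓ ∈ Finset.Ico 1 M, r ℓ ^ (if ℓ = M - 1 then 1 else 0)) *
        ((∏ ℓ ∈ Finset.Ico 1 M, r ℓ ^ (if ℓ ∈ ({M} : Finset ℕ) ∨ ℓ + 1 ∈ ({M} : Finset ℕ) then 1 else 2)) *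
          (∏ p ∈ Finset.Icc 1 M, (if p ∈ ({M} : Finset ℕ) then σ2 p else μ p ^ 2)) *
        ((∏ ℓ ∈ Finset.Ico 1 M, r ℓ ^ (if ℓ ∈ ({M - 3, M - 1} : Finset ℕ) ∨ ℓ + 1 ∈ ({M - 3, M - 1} : Finset ℕ) then 1 else 2)) *
          (∏ p ∈ Finset.Icc 1 M, (if p ∈ ({M - 3, M - 1} : Finset ℕ) then σ2 p else μ p ^ 2))))
      = ((∏ ℓ ∈ Finset.Ico 1 M, r ℓ ^ (if ℓ = M - 1 then 1 else 0)) *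
          ((∏ ℓ ∈ Finset.Ico 1 M, r ℓ ^ (if ℓ ∈ ({M} : Finset ℕ) ∨ ℓ + 1 ∈ ({M} : Finset ℕ) then 1 else 2)) *
           (∏ ℓ ∈ Finset.Ico 1 M, r ℓ ^ (if ℓ ∈ ({M - 3, M - 1} : Finset ℕ) ∨ ℓ + 1 ∈ ({M - 3, M - 1} : Finset ℕ) then 1 else 2)))) *
        ((∏ p ∈ Finset.Icc 1 M, (if p ∈ ({M} : Finset ℕ) then σ2 p else μ p ^ 2)) *
         (∏ p ∈ Finset.Icc 1 M, (if p ∈ ({M - 3, M - 1} : Finset ℕ) then σ2 p else μ p ^ 2))) := by ring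
    _ = ((∏ ℓ ∈ Finset.Ico 1 M, r ℓ ^ (if ℓ ∈ ({M - 1, M} : Finset ℕ) ∨ ℓ + 1 ∈ ({M - 1, M} : Finset ℕ) then 1 else 2)) *
         (∏ ℓ ∈ Finset.Ico 1 M, r ℓ ^ (if ℓ ∈ ({M - 3} : Finset ℕ) ∨ ℓ + 1 ∈ ({M - 3} : Finset ℕ) then 1 else 2))) *
        ((∏ p ∈ Finset.Icc 1 M, (if p ∈ ({M - 1, M} : Finset ℕ) then σ2 p else μ p ^ 2)) *
         (∏ p ∈ Finset.Icc 1 M, (if p ∈ ({M - 3} : Finset ℕ) then σ2 p else μ p ^ 2))) := by rw [hR, hQ]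
    _ = (∏ ℓ ∈ Finset.Ico 1 M, r ℓ ^ (if ℓ ∈ ({M - 1, M} : Finset ℕ) ∨ ℓ + 1 ∈ ({M - 1, M} : Finset ℕ) then 1 else 2)) *
          (∏ p ∈ Finset.Icc 1 M, (if p ∈ ({M - 1, M} : Finset ℕ) then σ2 p else μ p ^ 2)) *
        ((∏ ℓ ∈ Finset.Ico 1 M, r ℓ ^ (if ℓ ∈ ({M - 3} : Finset ℕ) ∨ ℓ + 1 ∈ ({M - 3} : Finset ℕ) then 1 else 2)) *
          (∏ p ∈ Finset.Icc 1 M, (if p ∈ ({M - 3} : Finset ℕ) then σ2 p else μ p ^ 2))) := by ring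
end

section
/- Let M ≥ 3 be an integer. The linear map T : ℝ^{ZMod M} → ℝ^{ZMod M} defined by (Tx)_p = x_p + x_{p−1} − x_{p+1} (indices taken modulo M) is bijective; that is, for every ψ ∈ ℝ^{ZMod M} there exists a unique x ∈ ℝ^{ZMod M} with x_p + x_{p−1} − x_{p+1} = ψ_p for all p. -/
/-- Invertibility of the Tensor Ring circulant system for `M ≥ 3`: the linear
map `T x p = x p + x (p−1) − x (p+1)` on `ℝ^{ZMod M}` is bijective; that is,
for every `ψ` there exists a unique `x` with
`x p + x (p−1) − x (p+1) = ψ p` for all `p`. -/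
theorem tr_circulant_bijective
    (M : ℕ) (hM : 3 ≤ M) :
    Function.Bijective
        (fun (x : ZMod M → ℝ) => fun p => x p + x (p - 1) - x (p + 1)) ∧
      ∀ ψ : ZMod M → ℝ, ∃! x : ZMod M → ℝ,
        ∀ p, x p + x (p - 1) - x (p + 1) = ψ p := by
  haveI : NeZero M := ⟨by omega⟩
  set T : (ZMod M → ℝ) →ₗ[ℝ] (ZMod M → ℝ) :=
    { toFun := fun x p => x p + x (p - 1) - x (p + 1)
      map_add' := by intro a b; funext p; simp [Pi.add_apply]; ring
      map_smul' := by intro c a; funext p; simp [Pi.smul_apply, smul_eq_mul]; ring }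
    with hT
  have hinj : Function.Injective T := by
    rw [← LinearMap.ker_eq_bot, LinearMap.ker_eq_bot']
    intro x hx
    have key : ∀ p, x p + x (p - 1) - x (p + 1) = 0 := fun p => congrFun hx p
    have shift : ∑ p : ZMod M, x p * x (p - 1) = ∑ p : ZMod M, x p * x (p + 1) := by
      rw [← Equiv.sum_comp (Equiv.addRight (1 : ZMod M)) (fun p => x p * x (p - 1))]
      simp [mul_comm]
    have hsum : ∑ p : ZMod M, x p * x p = 0 := by
      have h0 : ∑ p : ZMod M, x p * (x p + x (p - 1) - x (p + 1)) = 0 := by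
        simp [key]
      have hexp : ∑ p : ZMod M, x p * (x p + x (p - 1) - x (p + 1))
          = ∑ p : ZMod M, x p * x p
            + ∑ p : ZMod M, x p * x (p - 1)
            - ∑ p : ZMod M, x p * x (p + 1) := by
        simp only [mul_add, mul_sub, Finset.sum_sub_distrib, Finset.sum_add_distrib]
      rw [hexp, shift] at h0
      linarith
    have hzero : ∀ p : ZMod M, x p = 0 := by
      intro p
      have := (Finset.sum_eq_zero_iff_of_nonneg
        (fun i _ => mul_self_nonneg (x i))).mp hsum p (Finset.mem_univ p)
      exact mul_self_eq_zero.mp this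
    funext p; exact hzero p
  have hsurj : Function.Surjective T := (LinearMap.injective_iff_surjective).mp hinj
  have hbij : Function.Bijective
      (fun (x : ZMod M → ℝ) => fun p => x p + x (p - 1) - x (p + 1)) := ⟨hinj, hsurj⟩
  refine ⟨hbij, ?_⟩
  intro ψ
  obtain ⟨x, hx⟩ := hsurj ψ
  refine ⟨x, fun p => congrFun hx p, ?_⟩
  intro y hy
  apply hinj
  funext p
  have : x p + x (p - 1) - x (p + 1) = ψ p := congrFun hx p
  simp only [hT, LinearMap.coe_mk, AddHom.coe_mk]
  rw [hy p, this]
end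

section
/- Let M ≥ 3 be an integer and let r, r' : ZMod M → ℝ be two functions taking strictly positive values such that for every p (indices modulo M), r_p · r_{p−1} / r_{p+1} = r'_p · r'_{p−1} / r'_{p+1}. Then r = r'. -/
lemma tr_rank_aux (M : ℕ) (hM : 3 ≤ M)
    (r r' : ZMod M → ℝ) (hr : ∀ p, 0 < r p) (hr' : ∀ p, 0 < r' p)
    (h : ∀ p : ZMod M, r p * r (p - 1) / r (p + 1) = r' p * r' (p - 1) / r' (p + 1)) :
    ∀ p, r p ≤ r' p := by
  haveI : NeZero M := ⟨by omega⟩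
  have h' : ∀ p : ZMod M, r p * r (p-1) * r' (p+1) = r' p * r' (p-1) * r (p+1) := by
    intro p
    have hp := h p
    rw [div_eq_div_iff (hr _).ne' (hr' _).ne'] at hp
    exact hp
  set f : ZMod M → ℝ := fun p => r p / r' p with hf
  have hfpos : ∀ p, 0 < f p := fun p => div_pos (hr p) (hr' p)
  have hrec : ∀ p, f (p+1) = f p * f (p-1) := by
    intro p
    rw [hf]
    simp only
    rw [div_mul_div_comm, div_eq_div_iff (hr' _).ne' (mul_pos (hr' _) (hr' _)).ne']
    linear_combination - h' p
  obtain ⟨q, hq⟩ := Finite.exists_max f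
  have step : ∀ q', f q' = f q → f (q'-1) = 1 ∧ f (q'-2) = f q := by
    intro q' hq'
    have h1 : f (q'+1) = f q' * f (q'-1) := hrec q'
    have h2 : f q' = f (q'-1) * f (q'-2) := by
      have := hrec (q'-1)
      rw [show q'-1+1 = q' by ring, show q'-1-1 = q'-2 by ring] at this
      exact this
    have hle1 : f (q'-1) ≤ 1 := by nlinarith [hfpos q', hq (q'+1), hfpos (q'-1)]
    have hle2 : f q ≤ f (q'-2) := by nlinarith [hfpos (q'-2), hfpos (q'-1), hfpos q']
    have he2 : f (q'-2) = f q := le_antisymm (hq _) hle2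
    have he1 : f (q'-1) = 1 := by nlinarith [hfpos (q'-2), hfpos q']
    exact ⟨he1, he2⟩
  obtain ⟨e1, e2⟩ := step q rfl
  obtain ⟨e3, e4⟩ := step (q-2) e2
  have hkey : f (q-2+1) = f (q-2) * f (q-2-1) := hrec (q-2)
  rw [show q-2+1 = q-1 by ring, show q-2-1 = q-2-1 from rfl] at hkey
  have e3' : f (q-2-1) = 1 := by rw [show q-2-1 = q-2-1 from rfl]; exact e3
  rw [e1, e2, e3'] at hkey
  have hfq : f q = 1 := by linarith
  intro p
  have := hq p
  rw [hfq] at this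
  have : r p / r' p ≤ 1 := this
  calc r p = (r p / r' p) * r' p := (div_mul_cancel₀ _ (hr' p).ne').symm
    _ ≤ 1 * r' p := by nlinarith [hr' p]
    _ = r' p := one_mul _

/-- Identifiability of the Tensor Ring ranks: for `M ≥ 3`, two strictly
positive cyclic rank vectors `r, r' : ZMod M → ℝ` with the same moment
statistics `ξ p = r p · r (p−1) / r (p+1)` for every `p` must be equal. -/
theorem tr_rank_identifiability
    (M : ℕ) (hM : 3 ≤ M)
    (r r' : ZMod M → ℝ) (hr : ∀ p, 0 < r p) (hr' : ∀ p, 0 < r' p)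
    (h : ∀ p : ZMod M, r p * r (p - 1) / r (p + 1) = r' p * r' (p - 1) / r' (p + 1)) :
    r = r' := by
  funext p
  exact le_antisymm (tr_rank_aux M hM r r' hr hr' h p)
    (tr_rank_aux M hM r' r hr' hr (fun p => (h p).symm) p)
end
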